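/- Let X be a complex Banach space, U ⊆ X* an absolutely convex open set with fundamental family of absolutely convex U-bounded sets (Uₙ), which is not boundedly regular. Then there exist xₙ* ∈ Ũ \ weak*-closure(Uₙ) and xₙ ∈ X with |xₙ*(xₙ)| > 1 and |x*(xₙ)| ≤ 1 for all x* ∈ weak*-closure(Uₙ); consequently the homogeneous polynomials Pₙ(x*) = (x*(xₙ))^{pₙ} (with pₙ chosen so |xₙ*(xₙ)|^{pₙ} > n) form a sequence bounded uniformly on each weak*-closure(Uₚ) (by 1, for n ≥ p) but unbounded on some Ũ-bounded set. -/

import Mathlib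

/-!
Each `wscl (Un n)` is weak* closed and absolutely convex, so by Hahn–Banach in the weak* topology
(whose continuous functionals are evaluations at points of `X`) every functional outside it is
separated from it by some `x ∈ X`, in the polar form `|f x| ≤ 1 < |g x|`. Failure of bounded
regularity supplies such a functional `xₙ*` in a fixed `Ũ`-bounded set `E` for every `n`, and
raising `x* ↦ x*(xₙ)` to a high power `pₙ` gives polynomials that are `≤ 1` on the increasing sets
`wscl (Uₚ)`, `p ≤ n`, but exceed `n` at `xₙ* ∈ E`.
-/

open Metric NormedSpace Pointwise

variable {X : Type*} [NormedAddCommGroup X] [NormedSpace ℂ X]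

/-- Weak* closure of a set of functionals on the complex Banach space `X`. -/
noncomputable def wscl (S : Set (StrongDual ℂ X)) : Set (StrongDual ℂ X) :=
  StrongDual.toWeakDual ⁻¹' closure (StrongDual.toWeakDual '' S)

/-- `B` is a `U`-bounded set: norm-bounded with positive distance to the complement of `U`. -/
def UBounded (U B : Set (StrongDual ℂ X)) : Prop :=
  B ⊆ U ∧ Bornology.IsBounded B ∧ ∃ c > 0, ∀ x ∈ B, ∀ y ∉ U, c ≤ dist x y

/-- The envelope `Ũ`: the union of the weak* closures of all `U`-bounded sets. -/
noncomputable def tildeEnv (U : Set (StrongDual ℂ X)) : Set (StrongDual ℂ X) :=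
  ⋃ B ∈ {B | UBounded U B}, wscl B

theorem RCLike.exists_norm_le_one_mul_eq_norm {𝕜 : Type*} [RCLike 𝕜] (z : 𝕜) :
    ∃ c : 𝕜, ‖c‖ ≤ 1 ∧ c * z = ‖z‖ := by
  refine ⟨starRingEnd 𝕜 z / ‖z‖, ?_, ?_⟩
  · rw [norm_div, RCLike.norm_conj, RCLike.norm_ofReal, abs_norm]
    exact div_self_le_one _
  · rcases eq_or_ne z 0 with rfl | hz
    · simp
    · rw [div_mul_eq_mul_div, RCLike.conj_mul]
      field_simp

theorem RCLike.separate_balanced_convex_closed_point {𝕜 E : Type*} [RCLike 𝕜]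
    [TopologicalSpace E] [AddCommGroup E] [IsTopologicalAddGroup E] [Module 𝕜 E]
    [ContinuousSMul 𝕜 E] [Module ℝ E] [IsScalarTower ℝ 𝕜 E] [LocallyConvexSpace ℝ E]
    {s : Set E} (hs₀ : (0 : E) ∈ s) (hsb : Balanced 𝕜 s) (hsc : Convex ℝ s) (hs : IsClosed s)
    {x : E} (hx : x ∉ s) :
    ∃ f : StrongDual 𝕜 E, (∀ a ∈ s, ‖f a‖ ≤ 1) ∧ 1 < ‖f x‖ := by
  obtain ⟨f, u, hfs, hfx⟩ := RCLike.geometric_hahn_banach_closed_point (𝕜 := 𝕜) hsc hs hx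
  have hu : 0 < u := by simpa using hfs 0 hs₀
  -- rotating `a` inside the balanced set `s` makes `f a` real and nonnegative
  have hnorm : ∀ a ∈ s, ‖f a‖ ≤ u := fun a ha => by
    obtain ⟨c, hc, hca⟩ := RCLike.exists_norm_le_one_mul_eq_norm (f a)
    simpa [hca] using (hfs _ (hsb.smul_mem hc ha)).le
  refine ⟨(u⁻¹ : 𝕜) • f, fun a ha => ?_, ?_⟩
  · rw [smul_apply, norm_smul, norm_inv, RCLike.norm_ofReal, abs_of_pos hu]
    exact inv_mul_le_one_of_le₀ (hnorm a ha) hu.le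
  · rw [smul_apply, norm_smul, norm_inv, RCLike.norm_ofReal, abs_of_pos hu]
    exact (one_lt_inv_mul₀ hu).2 (hfx.trans_le (RCLike.re_le_norm _))

-- Hahn–Banach over `ℂ` sees the real structure of `WeakDual ℂ X` as `Module.complexToReal`,
-- so the real locally convex structure must be stated for that instance.
instance WeakDual.instIsScalarTowerRealComplex : IsScalarTower ℝ ℂ (WeakDual ℂ X) :=
  inferInstanceAs (IsScalarTower ℝ ℂ (StrongDual ℂ X))

instance WeakDual.instLocallyConvexSpaceReal :
    @LocallyConvexSpace ℝ (WeakDual ℂ X) _ _ _ (Module.complexToReal (WeakDual ℂ X)) _ :=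
  WeakBilin.locallyConvexSpace

instance WeakDual.instContinuousConstSMulReal :
    @ContinuousConstSMul ℝ (WeakDual ℂ X) _ (Module.complexToReal (WeakDual ℂ X)).toSMul :=
  ⟨fun c => continuous_const_smul (c : ℂ)⟩

theorem wscl_mono {S T : Set (StrongDual ℂ X)} (h : S ⊆ T) : wscl S ⊆ wscl T :=
  Set.preimage_mono (closure_mono (Set.image_mono h))

theorem nonempty_of_wscl_nonempty {S : Set (StrongDual ℂ X)} (h : (wscl S).Nonempty) :
    S.Nonempty := by
  by_contra hS
  simp [Set.not_nonempty_iff_eq_empty.1 hS, wscl] at h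

theorem exists_separating_vector_of_notMem_wscl {C : Set (StrongDual ℂ X)} {a : StrongDual ℂ X}
    (ha : a ∈ C) (hCb : Balanced ℂ C) (hCc : Convex ℝ C) {g : StrongDual ℂ X} (hg : g ∉ wscl C) :
    ∃ x : X, 1 < ‖g x‖ ∧ ∀ f ∈ wscl C, ‖f x‖ ≤ 1 := by
  let e : StrongDual ℂ X ≃ₗ[ℂ] WeakDual ℂ X := StrongDual.toWeakDual
  have h0 : (0 : WeakDual ℂ X) ∈ closure (e '' C) :=
    subset_closure ⟨0, zero_smul ℂ a ▸ hCb.smul_mem (by simp) ha, e.map_zero⟩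
  have hb : Balanced ℂ (closure (e '' C)) := by
    rw [e.image_eq_preimage_symm]
    exact (hCb.mulActionHom_preimage e.symm.toLinearMap.toMulActionHom).closure
  have hc : Convex ℝ (closure (e '' C)) :=
    (hCc.linear_image (e.toLinearMap.restrictScalars ℝ)).closure
  obtain ⟨F, hFC, hFg⟩ :=
    RCLike.separate_balanced_convex_closed_point h0 hb hc isClosed_closure hg
  obtain ⟨x, rfl⟩ := LinearMap.dualEmbedding_surjective (topDualPairing ℂ X) F
  exact ⟨x, hFg, fun f hf => hFC _ hf⟩

theorem monotone_of_add_ball_subset {E : Type*} [SeminormedAddCommGroup E] {s : ℕ → Set E}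
    (h : ∀ n, ∃ r > (0 : ℝ), s n + ball (0 : E) r ⊆ s (n + 1)) : Monotone s :=
  monotone_nat_of_le_succ fun n =>
    let ⟨_, hr, hsub⟩ := h n
    (Set.subset_add_left _ (mem_ball_self hr)).trans hsub

theorem exists_nonempty_of_tildeEnv_nonempty {U : Set (StrongDual ℂ X)}
    {Un : ℕ → Set (StrongDual ℂ X)} (hfund : ∀ B, UBounded U B → ∃ n, B ⊆ Un n)
    (h : (tildeEnv U).Nonempty) : ∃ m, (Un m).Nonempty := by
  obtain ⟨f, hf⟩ := h
  simp only [tildeEnv, Set.mem_ofPred_eq, Set.mem_iUnion, exists_prop] at hf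
  obtain ⟨B, hB, hfB⟩ := hf
  obtain ⟨m, hm⟩ := hfund B hB
  exact ⟨m, (nonempty_of_wscl_nonempty ⟨f, hfB⟩).mono hm⟩

theorem exists_separating_of_not_subset_wscl {Un : ℕ → Set (StrongDual ℂ X)}
    (hUnB : ∀ n, Balanced ℂ (Un n)) (hUnC : ∀ n, Convex ℝ (Un n)) (hmono : Monotone Un)
    {m : ℕ} {a : StrongDual ℂ X} (ha : a ∈ Un m) {E : Set (StrongDual ℂ X)}
    (hE : ∀ n, ¬ E ⊆ wscl (Un n)) (n : ℕ) :
    ∃ g ∈ E, g ∉ wscl (Un n) ∧ ∃ x : X, 1 < ‖g x‖ ∧ ∀ f ∈ wscl (Un n), ‖f x‖ ≤ 1 := by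
  have hsub : wscl (Un n) ⊆ wscl (Un (n + m)) := wscl_mono (hmono le_self_add)
  obtain ⟨g, hgE, hg⟩ := Set.not_subset.1 (hE (n + m))
  obtain ⟨x, hgx, hx⟩ :=
    exists_separating_vector_of_notMem_wscl (hmono le_add_self ha) (hUnB _) (hUnC _) hg
  exact ⟨g, hgE, fun h => hg (hsub h), x, hgx, fun f hf => hx f (hsub hf)⟩

theorem not_boundedly_regular_polynomials_general
    (U : Set (StrongDual ℂ X))
    (Un : ℕ → Set (StrongDual ℂ X))
    (hUnB : ∀ n, Balanced ℂ (Un n)) (hUnC : ∀ n, Convex ℝ (Un n))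
    (hfund : ∀ B, UBounded U B → ∃ n, B ⊆ Un n)
    (hmono : ∀ n, ∃ r > (0 : ℝ), Un n + ball (0 : StrongDual ℂ X) r ⊆ Un (n + 1))
    (hnotreg : ∃ E, UBounded (tildeEnv U) E ∧ ∀ n, ¬ E ⊆ wscl (Un n)) :
    ∃ E : Set (StrongDual ℂ X), UBounded (tildeEnv U) E ∧
      ∃ (xs : ℕ → StrongDual ℂ X) (x : ℕ → X) (p : ℕ → ℕ),
        (∀ n, xs n ∈ (E ∩ tildeEnv U) \ wscl (Un n)) ∧
        (∀ n, 1 < ‖xs n (x n)‖) ∧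
        (∀ n, ∀ f ∈ wscl (Un n), ‖f (x n)‖ ≤ 1) ∧
        (∀ n : ℕ, (n : ℝ) < ‖xs n (x n)‖ ^ p n) ∧
        (∀ m n : ℕ, m ≤ n → ∀ f ∈ wscl (Un m), ‖f (x n)‖ ^ p n ≤ 1) ∧
        (∀ n : ℕ, ∃ f ∈ E, (n : ℝ) ≤ ‖f (x n)‖ ^ p n) := by
  obtain ⟨E, hE, hEn⟩ := hnotreg
  have hUn : Monotone Un := monotone_of_add_ball_subset hmono
  obtain ⟨g, hgE, -⟩ := Set.not_subset.1 (hEn 0)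
  obtain ⟨m, a, ha⟩ := exists_nonempty_of_tildeEnv_nonempty hfund ⟨g, hE.1 hgE⟩
  choose xs hxsE hxsn x hx1 hxb using
    exists_separating_of_not_subset_wscl hUnB hUnC hUn ha hEn
  choose p hp using fun n : ℕ => pow_unbounded_of_one_lt (n : ℝ) (hx1 n)
  refine ⟨E, hE, xs, x, p, fun n => ⟨⟨hxsE n, hE.1 (hxsE n)⟩, hxsn n⟩, hx1, hxb, hp, ?_,
    fun n => ⟨xs n, hxsE n, (hp n).le⟩⟩
  exact fun m n hmn f hf => pow_le_one₀ (norm_nonneg _) (hxb n f (wscl_mono (hUn hmn) hf))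

/-- If `U ⊆ X*` is an absolutely convex open set with a fundamental family `(Uₙ)` of
absolutely convex `U`-bounded sets which is not boundedly regular, then there are a
`Ũ`-bounded set `E`, points `xₙ* ∈ (E ∩ Ũ) \ w*-cl(Uₙ)` and vectors `xₙ ∈ X` with
`|xₙ*(xₙ)| > 1` and `|x*(xₙ)| ≤ 1` on `w*-cl(Uₙ)`, and exponents `pₙ` with
`|xₙ*(xₙ)|^{pₙ} > n`; the homogeneous polynomials `Pₙ(x*) = (x*(xₙ))^{pₙ}` are then
bounded by `1` on each `w*-cl(Uₚ)` for `n ≥ p` but unbounded on the `Ũ`-bounded set `E`. -/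
theorem not_boundedly_regular_polynomials [CompleteSpace X]
    (U : Set (StrongDual ℂ X)) (hUo : IsOpen U) (hUb : Balanced ℂ U) (hUc : Convex ℝ U)
    (Un : ℕ → Set (StrongDual ℂ X))
    (hUnB : ∀ n, Balanced ℂ (Un n)) (hUnC : ∀ n, Convex ℝ (Un n))
    (hUnU : ∀ n, UBounded U (Un n))
    (hfund : ∀ B, UBounded U B → ∃ n, B ⊆ Un n)
    (hmono : ∀ n, ∃ r > (0 : ℝ), Un n + ball (0 : StrongDual ℂ X) r ⊆ Un (n + 1))
    (hnotreg : ∃ E, UBounded (tildeEnv U) E ∧ ∀ n, ¬ E ⊆ wscl (Un n)) :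
    ∃ E : Set (StrongDual ℂ X), UBounded (tildeEnv U) E ∧
      ∃ (xs : ℕ → StrongDual ℂ X) (x : ℕ → X) (p : ℕ → ℕ),
        (∀ n, xs n ∈ (E ∩ tildeEnv U) \ wscl (Un n)) ∧
        (∀ n, 1 < ‖xs n (x n)‖) ∧
        (∀ n, ∀ f ∈ wscl (Un n), ‖f (x n)‖ ≤ 1) ∧
        (∀ n : ℕ, (n : ℝ) < ‖xs n (x n)‖ ^ p n) ∧
        (∀ m n : ℕ, m ≤ n → ∀ f ∈ wscl (Un m), ‖f (x n)‖ ^ p n ≤ 1) ∧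
        (∀ n : ℕ, ∃ f ∈ E, (n : ℝ) ≤ ‖f (x n)‖ ^ p n) :=
  not_boundedly_regular_polynomials_general U Un hUnB hUnC hfund hmono hnotreg
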